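/- arXiv:2210.05600 — 4 statements merged into one kernel-verified Lean document; each statement's English description precedes it below -/
import Mathlib

section
/- A block lower-bidiagonal matrix of the form J = [L ; T-blocks] as in the paper, where the left block column stacks matrices L^k interleaved with zero rows, and the right part is block bidiagonal with diagonal blocks T^k and subdiagonal blocks (−I₃, I₃), has full column rank if and only if the stacked matrix F = [L¹ T¹; L² T²; …; L^K T^K] (with the L^k stacked in one column block and T^k stacked in another) has full column rank. -/
open Matrix

/-- The block Jacobian `J` of the paper: the left column block stacks the `L^k`
(interleaved with zero rows coming from the relative-position constraints), and the right
part is block bidiagonal with diagonal blocks `T^k` and subdiagonal blocks `(-I₃, I₃)`. -/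
noncomputable def slamJacobian {K m : ℕ}
    (L : Fin K → Matrix (Fin (4 * m)) (Fin (8 * m)) ℝ)
    (T : Fin K → Matrix (Fin (4 * m)) (Fin 3) ℝ) :
    Matrix ((Fin K × Fin (4 * m)) ⊕ (Fin (K - 1) × Fin 3))
      (Fin (8 * m) ⊕ (Fin K × Fin 3)) ℝ :=
  fun r c =>
    match r, c with
    | Sum.inl (k, i), Sum.inl j => L k i j
    | Sum.inl (k, i), Sum.inr (k', j) => if k' = k then T k i j else 0
    | Sum.inr _, Sum.inl _ => 0
    | Sum.inr (k, i), Sum.inr (k', j) =>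
        (if (k' : ℕ) = (k : ℕ) then (if i = j then (-1 : ℝ) else 0) else 0) +
        (if (k' : ℕ) = (k : ℕ) + 1 then (if i = j then (1 : ℝ) else 0) else 0)

/-- The compressed matrix `F = [L¹ T¹; … ; L^K T^K]`. -/
noncomputable def slamF {K m : ℕ}
    (L : Fin K → Matrix (Fin (4 * m)) (Fin (8 * m)) ℝ)
    (T : Fin K → Matrix (Fin (4 * m)) (Fin 3) ℝ) :
    Matrix (Fin K × Fin (4 * m)) (Fin (8 * m) ⊕ Fin 3) ℝ :=
  fun r c =>
    match r, c with
    | (k, i), Sum.inl j => L k i j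
    | (k, i), Sum.inr j => T k i j


lemma inj_iff_ker {m n : Type*} [Fintype m] [Fintype n] (M : Matrix m n ℝ) :
    Function.Injective M.mulVec ↔ ∀ v, M.mulVec v = 0 → v = 0 := by
  constructor
  · intro h v hv; exact h (by simpa using hv)
  · intro h
    have hk : LinearMap.ker M.mulVecLin = ⊥ := by
      rw [LinearMap.ker_eq_bot']
      intro v hv; exact h v hv
    exact LinearMap.ker_eq_bot.mp hk

lemma rank_eq_card_iff_inj {m n : Type*} [Fintype m] [Fintype n] (M : Matrix m n ℝ) :
    M.rank = Fintype.card n ↔ Function.Injective M.mulVec := by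
  rw [Matrix.rank, ← @Module.finrank_fintype_fun_eq_card ℝ n _ _ _,
    ← M.mulVecLin.finrank_range_add_finrank_ker]
  constructor
  · intro h
    have h0 : Module.finrank ℝ (LinearMap.ker M.mulVecLin) = 0 := by omega
    exact LinearMap.ker_eq_bot.mp (Submodule.finrank_eq_zero.mp h0)
  · intro h
    rw [LinearMap.ker_eq_bot.mpr h]; simp

section
variable {K m : ℕ}
    (L : Fin K → Matrix (Fin (4 * m)) (Fin (8 * m)) ℝ)
    (T : Fin K → Matrix (Fin (4 * m)) (Fin 3) ℝ)

lemma mulVec_inl (v : (Fin (8 * m) ⊕ (Fin K × Fin 3)) → ℝ) (k : Fin K) (i : Fin (4 * m)) :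
    (slamJacobian L T).mulVec v (Sum.inl (k, i)) =
      (∑ j, L k i j * v (Sum.inl j)) + ∑ j, T k i j * v (Sum.inr (k, j)) := by
  simp only [Matrix.mulVec, dotProduct, Fintype.sum_sum_type, slamJacobian]
  congr 1
  rw [Fintype.sum_prod_type]
  rw [Finset.sum_comm]
  congr 1; ext j
  rw [Finset.sum_eq_single k]
  · simp
  · intro b _ hb; simp [hb]
  · simp

lemma mulVec_inr (v : (Fin (8 * m) ⊕ (Fin K × Fin 3)) → ℝ) (k : Fin (K - 1)) (i : Fin 3)
    (h1 : (k : ℕ) < K) (h2 : (k : ℕ) + 1 < K) :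
    (slamJacobian L T).mulVec v (Sum.inr (k, i)) =
      v (Sum.inr (⟨(k : ℕ) + 1, h2⟩, i)) - v (Sum.inr (⟨(k : ℕ), h1⟩, i)) := by
  simp only [Matrix.mulVec, dotProduct, Fintype.sum_sum_type, slamJacobian]
  rw [Fintype.sum_prod_type]
  simp only [zero_mul, Finset.sum_const_zero, zero_add, add_mul]
  simp only [Finset.sum_add_distrib]
  have e1 : ∀ b : Fin K, b ≠ ⟨(k : ℕ), h1⟩ → (b : ℕ) ≠ (k : ℕ) :=
    fun b hb h => hb (by ext; simp [h])
  have e2 : ∀ b : Fin K, b ≠ ⟨(k : ℕ) + 1, h2⟩ → (b : ℕ) ≠ (k : ℕ) + 1 :=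
    fun b hb h => hb (by ext; simp [h])
  rw [Finset.sum_eq_single (⟨(k : ℕ), h1⟩ : Fin K) (fun b _ hb => by simp [e1 b hb])
    (by simp), Finset.sum_eq_single (⟨(k : ℕ) + 1, h2⟩ : Fin K)
    (fun b _ hb => by simp [e2 b hb]) (by simp)]
  rw [Finset.sum_eq_single i (by intro b _ hb; simp [Ne.symm hb]) (by simp),
    Finset.sum_eq_single i (by intro b _ hb; simp [Ne.symm hb]) (by simp)]
  simp; ring

lemma mulVecF (v : (Fin (8 * m) ⊕ Fin 3) → ℝ) (k : Fin K) (i : Fin (4 * m)) :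
    (slamF L T).mulVec v (k, i) =
      (∑ j, L k i j * v (Sum.inl j)) + ∑ j, T k i j * v (Sum.inr j) := by
  simp [Matrix.mulVec, dotProduct, Fintype.sum_sum_type, slamF]

end

/-- `J` has full column rank if and only if `F` has full column rank. -/
theorem slamJacobian_full_column_rank_iff {K m : ℕ} (hK : 1 ≤ K)
    (L : Fin K → Matrix (Fin (4 * m)) (Fin (8 * m)) ℝ)
    (T : Fin K → Matrix (Fin (4 * m)) (Fin 3) ℝ) :
    (slamJacobian L T).rank = 8 * m + 3 * K ↔ (slamF L T).rank = 8 * m + 3 := by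
  have cardJ : Fintype.card (Fin (8 * m) ⊕ (Fin K × Fin 3)) = 8 * m + 3 * K := by
    simp [mul_comm]
  have cardF : Fintype.card (Fin (8 * m) ⊕ Fin 3) = 8 * m + 3 := by simp
  rw [← cardJ, ← cardF, rank_eq_card_iff_inj, rank_eq_card_iff_inj]
  rw [inj_iff_ker, inj_iff_ker]
  constructor
  · -- J injective → F injective
    intro hJinj v hv
    -- build w on J's columns
    set w : (Fin (8 * m) ⊕ (Fin K × Fin 3)) → ℝ := fun c =>
      match c with
      | Sum.inl j => v (Sum.inl j)
      | Sum.inr (_, j) => v (Sum.inr j) with hw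
    have hw0 : w = 0 := by
      apply hJinj
      funext r
      match r with
      | Sum.inl (k, i) =>
        rw [mulVec_inl]
        have := congrFun hv (k, i)
        rw [mulVecF] at this
        simpa [hw] using this
      | Sum.inr (k, i) =>
        have h1 : (k : ℕ) < K := lt_of_lt_of_le k.2 (Nat.sub_le K 1)
        have h2 : (k : ℕ) + 1 < K := by omega
        rw [mulVec_inr L T w k i h1 h2]
        simp [hw]
    funext c
    match c with
    | Sum.inl j => exact congrFun hw0 (Sum.inl j)
    | Sum.inr j => exact congrFun hw0 (Sum.inr (⟨0, hK⟩, j))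
  · -- F injective → J injective
    intro hFinj v hv
    -- t is constant in k
    have hconst : ∀ k : Fin K, ∀ j, v (Sum.inr (k, j)) = v (Sum.inr (⟨0, hK⟩, j)) := by
      intro k j
      obtain ⟨n, hn⟩ := k
      induction n with
      | zero => rfl
      | succ p ih =>
        have hp1 : p < K := by omega
        have hpk : p < K - 1 := by omega
        have := congrFun hv (Sum.inr (⟨p, hpk⟩, j))
        rw [mulVec_inr L T v ⟨p, hpk⟩ j hp1 (by simpa using hn)] at this
        simp only [Pi.zero_apply, sub_eq_zero] at this
        rw [show (⟨p + 1, hn⟩ : Fin K) = ⟨(p : ℕ) + 1, _⟩ from rfl, this]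
        exact ih hp1
    set u : (Fin (8 * m) ⊕ Fin 3) → ℝ := fun c =>
      match c with
      | Sum.inl j => v (Sum.inl j)
      | Sum.inr j => v (Sum.inr (⟨0, hK⟩, j)) with hu
    have hu0 : u = 0 := by
      apply hFinj
      funext ⟨k, i⟩
      rw [mulVecF]
      have := congrFun hv (Sum.inl (k, i))
      rw [mulVec_inl] at this
      simp only [Pi.zero_apply] at this ⊢
      rw [← this]
      congr 1
      apply Finset.sum_congr rfl
      intro j _
      rw [hu]
      simp [hconst k j]
    funext c
    match c with
    | Sum.inl j => exact congrFun hu0 (Sum.inl j)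
    | Sum.inr (k, j) => rw [hconst k j]; exact congrFun hu0 (Sum.inr j)
end

section
/- If the sound source positions are all collinear with the origin, i.e., there exists a fixed unit vector u ∈ ℝ³ and positive scalars λ_k with s^k = λ_k u for all k, then every nonzero row of T̄ is a scalar multiple of uᵀ, and hence rank(T̄) ≤ 1 < 3, so T̄ does not have full column rank. -/
open Matrix

/-- The matrix `T̄` of the paper: first two rows zero, then for `k = 3,…,K` the rows
`-(k-2)·(s¹)ᵀ/(c·d₁¹) + (k-1)·(s²)ᵀ/(c·d₁²) - (s^k)ᵀ/(c·d₁^k)` (with `d₁^k = ‖s^k‖`),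
then `3K` zero rows. -/
noncomputable def Tbar (K : ℕ) (c : ℝ) (s : ℕ → EuclideanSpace ℝ (Fin 3)) :
    Matrix ((Fin 2 ⊕ Fin (K - 2)) ⊕ Fin (3 * K)) (Fin 3) ℝ :=
  fun r j =>
    match r with
    | Sum.inl (Sum.inl _) => 0
    | Sum.inl (Sum.inr k) =>
        -((k : ℕ) + 1 : ℝ) * s 1 j / (c * ‖s 1‖)
          + ((k : ℕ) + 2 : ℝ) * s 2 j / (c * ‖s 2‖)
          - s ((k : ℕ) + 3) j / (c * ‖s ((k : ℕ) + 3)‖)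
    | Sum.inr _ => 0

/-- Theorem 4(ii): if all source positions are collinear with the origin
(`s^k = λ_k • u` for a unit vector `u` and positive scalars `λ_k`), then every row of
`T̄` is a scalar multiple of `uᵀ`, hence `rank T̄ ≤ 1 < 3`. -/
theorem Tbar_rank_le_one_of_collinear (K : ℕ) (c : ℝ)
    (s : ℕ → EuclideanSpace ℝ (Fin 3)) (hc : 0 < c)
    (u : EuclideanSpace ℝ (Fin 3)) (hu : ‖u‖ = 1)
    (lam : ℕ → ℝ) (hlam : ∀ k, 1 ≤ k → k ≤ K → 0 < lam k)
    (hcol : ∀ k, 1 ≤ k → k ≤ K → s k = lam k • u) :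
    (∀ r, ∃ t : ℝ, ∀ j, Tbar K c s r j = t * u j) ∧
    (Tbar K c s).rank ≤ 1 ∧ (Tbar K c s).rank < 3 := by
  have hz : ∀ r j, Tbar K c s r j = 0 := by
    rintro ((r | r) | r) j
    · rfl
    · have hK : (r : ℕ) < K - 2 := r.isLt
      have hK3 : 3 ≤ K := by omega
      have h1 := hcol 1 (by omega) (by omega)
      have h2 := hcol 2 (by omega) (by omega)
      have h3 := hcol ((r : ℕ) + 3) (by omega) (by omega)
      have l1 := hlam 1 (by omega) (by omega)
      have l2 := hlam 2 (by omega) (by omega)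
      have l3 := hlam ((r : ℕ) + 3) (by omega) (by omega)
      have n1 : ‖s 1‖ = lam 1 := by
        rw [h1, norm_smul, hu]; simp [abs_of_pos l1]
      have n2 : ‖s 2‖ = lam 2 := by
        rw [h2, norm_smul, hu]; simp [abs_of_pos l2]
      have n3 : ‖s ((r : ℕ) + 3)‖ = lam ((r : ℕ) + 3) := by
        rw [h3, norm_smul, hu]; simp [abs_of_pos l3]
      have e1 : s 1 j = lam 1 * u j := by rw [h1]; rfl
      have e2 : s 2 j = lam 2 * u j := by rw [h2]; rfl
      have e3 : s ((r : ℕ) + 3) j = lam ((r : ℕ) + 3) * u j := by rw [h3]; rfl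
      show -((r : ℕ) + 1 : ℝ) * s 1 j / (c * ‖s 1‖)
          + ((r : ℕ) + 2 : ℝ) * s 2 j / (c * ‖s 2‖)
          - s ((r : ℕ) + 3) j / (c * ‖s ((r : ℕ) + 3)‖) = 0
      rw [n1, n2, n3, e1, e2, e3]
      field_simp
      ring
    · rfl
  have hzero : Tbar K c s = 0 := by
    ext r j; exact hz r j
  refine ⟨fun r => ⟨0, fun j => by rw [hz r j, zero_mul]⟩, ?_, ?_⟩
  · rw [hzero, Matrix.rank_zero]; omega
  · rw [hzero, Matrix.rank_zero]; omega
end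

section
/- Suppose for all k, s^k − p = λ_k (s¹ − p) for a fixed point p ∈ ℝ³ and positive scalars λ_k (all source positions collinear with the array position p). Then the stacked matrix M_U = [U¹; U²; …; U^K], where U^k = −Rᵀ(1/(d^k)³)((d^k)² I₃ − v^k (v^k)ᵀ) with v^k = s^k − p and d^k = ‖v^k‖, has rank at most 2, hence is not of full column rank. -/
/-!
`A(v)` is `‖v‖⁻¹` times the orthogonal projection onto `v^⊥`, so it kills `v`. Under
collinearity every `v^k` is a nonzero multiple of `v¹`, hence `v¹` lies in the kernel of every
block `U^k` and therefore of `M_U`; a nontrivial kernel in `ℝ³` forces rank at most `2`.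
-/

open Matrix

/-- The matrix `A(v) = (1/d³)(d² I₃ − v vᵀ)` appearing in the DOA Jacobian, `d = ‖v‖`. -/
noncomputable def Amat (v : EuclideanSpace ℝ (Fin 3)) : Matrix (Fin 3) (Fin 3) ℝ :=
  (1 / ‖v‖ ^ 3) • (‖v‖ ^ 2 • (1 : Matrix (Fin 3) (Fin 3) ℝ)
    - Matrix.of fun i j => v i * v j)

theorem Amat_mulVec_self (v : EuclideanSpace ℝ (Fin 3)) : Amat v *ᵥ v = 0 := by
  have hvv : v ⬝ᵥ v = ‖v‖ ^ 2 := by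
    rw [EuclideanSpace.real_norm_sq_eq]
    simp only [dotProduct, sq]
  change ((1 / ‖v‖ ^ 3) • (‖v‖ ^ 2 • 1 - vecMulVec v v)) *ᵥ v = 0
  rw [smul_mulVec, sub_mulVec, smul_mulVec, one_mulVec, vecMulVec_mulVec, hvv, op_smul_eq_smul,
    sub_self, smul_zero]

theorem Matrix.rank_lt_card_of_mulVec_eq_zero {m n K : Type*} [Fintype m] [Fintype n]
    [Field K] (A : Matrix m n K) {x : n → K} (hx : x ≠ 0) (hAx : A *ᵥ x = 0) :
    A.rank < Fintype.card n := by
  have hker : 0 < Module.finrank K (LinearMap.ker A.mulVecLin) :=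
    Module.finrank_pos_iff_exists_ne_zero.mpr
      ⟨⟨x, LinearMap.mem_ker.mpr hAx⟩, by simpa using hx⟩
  have := A.mulVecLin.finrank_range_add_finrank_ker
  rw [Module.finrank_fintype_fun_eq_card] at this
  exact (Nat.lt_add_of_pos_right hker).trans_eq this

theorem MU_not_full_column_rank_of_collinear_general (K : ℕ) (hK : 1 ≤ K)
    (R : Matrix (Fin 3) (Fin 3) ℝ)
    (p : EuclideanSpace ℝ (Fin 3)) (s : Fin K → EuclideanSpace ℝ (Fin 3))
    (hs : ∀ k, s k ≠ p)
    (lam : Fin K → ℝ) (hlam : ∀ k, 0 < lam k)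
    (hcol : ∀ k, s k - p = lam k • (s ⟨0, hK⟩ - p)) :
    (Matrix.of (fun (r : Fin K × Fin 3) (j : Fin 3) =>
        (-(Rᵀ) * Amat (s r.1 - p)) r.2 j)).rank ≤ 2 := by
  set v := s ⟨0, hK⟩ - p
  have hv : (v : Fin 3 → ℝ) ≠ 0 :=
    (WithLp.ofLp_eq_zero (p := 2)).not.mpr (sub_ne_zero.mpr (hs _))
  have hblock (k : Fin K) : Amat (s k - p) *ᵥ v = 0 := by
    have hv_eq : (v : Fin 3 → ℝ) = (lam k)⁻¹ • ⇑(s k - p) := by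
      rw [hcol k]; ext i; simp [(hlam k).ne']
    rw [hv_eq, mulVec_smul, Amat_mulVec_self, smul_zero]
  have hkernel : Matrix.of (fun (r : Fin K × Fin 3) (j : Fin 3) =>
      (-(Rᵀ) * Amat (s r.1 - p)) r.2 j) *ᵥ v = 0 := by
    ext ⟨k, i⟩
    change ((-(Rᵀ) * Amat (s k - p)) *ᵥ v) i = 0
    rw [← mulVec_mulVec, hblock, mulVec_zero, Pi.zero_apply]
  simpa using Nat.lt_succ_iff.mp (rank_lt_card_of_mulVec_eq_zero _ hv hkernel)

/-- Theorem 5(i): if all source positions are collinear with the array position `p`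
(`s^k − p = λ_k (s¹ − p)`, `λ_k > 0`), then the stacked matrix
`M_U = [U¹; …; U^K]` with `U^k = -Rᵀ A(s^k − p)` has rank at most `2`,
hence is not of full column rank. -/
theorem MU_not_full_column_rank_of_collinear (K : ℕ) (hK : 1 ≤ K)
    (R : Matrix (Fin 3) (Fin 3) ℝ) (hR : R * Rᵀ = 1) (hdet : R.det = 1)
    (p : EuclideanSpace ℝ (Fin 3)) (s : Fin K → EuclideanSpace ℝ (Fin 3))
    (hs : ∀ k, s k ≠ p)
    (lam : Fin K → ℝ) (hlam : ∀ k, 0 < lam k)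
    (hcol : ∀ k, s k - p = lam k • (s ⟨0, hK⟩ - p)) :
    (Matrix.of (fun (r : Fin K × Fin 3) (j : Fin 3) =>
        (-(Rᵀ) * Amat (s r.1 - p)) r.2 j)).rank ≤ 2 :=
  MU_not_full_column_rank_of_collinear_general K hK R p s hs lam hlam hcol
end

section
/- Let R_x(θ_x), R_y(θ_y), R_z(θ_z) be the standard rotation matrices about the x, y, z axes, and define V(v) ∈ ℝ^{3×3} whose columns are (∂R_xᵀ/∂θ_x) R_yᵀ R_zᵀ v, R_xᵀ (∂R_yᵀ/∂θ_y) R_zᵀ v, and R_xᵀ R_yᵀ (∂R_zᵀ/∂θ_z) v (scaled by 1/‖v‖). If θ_y = π/2, then for every v ∈ ℝ³ the matrix V(v) has rank at most 2, so det V(v) = 0. -/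
open Matrix Real

/-- Rotation about the `x`-axis. -/
noncomputable def Rx (θ : ℝ) : Matrix (Fin 3) (Fin 3) ℝ :=
  !![1, 0, 0; 0, cos θ, -sin θ; 0, sin θ, cos θ]

/-- Rotation about the `y`-axis. -/
noncomputable def Ry (θ : ℝ) : Matrix (Fin 3) (Fin 3) ℝ :=
  !![cos θ, 0, sin θ; 0, 1, 0; -sin θ, 0, cos θ]

/-- Rotation about the `z`-axis. -/
noncomputable def Rz (θ : ℝ) : Matrix (Fin 3) (Fin 3) ℝ :=
  !![cos θ, -sin θ, 0; sin θ, cos θ, 0; 0, 0, 1]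

/-- `∂(Rxᵀ)/∂θ`. -/
noncomputable def dRxT (θ : ℝ) : Matrix (Fin 3) (Fin 3) ℝ :=
  !![0, 0, 0; 0, -sin θ, cos θ; 0, -cos θ, -sin θ]

/-- `∂(Ryᵀ)/∂θ`. -/
noncomputable def dRyT (θ : ℝ) : Matrix (Fin 3) (Fin 3) ℝ :=
  !![-sin θ, 0, -cos θ; 0, 0, 0; cos θ, 0, -sin θ]

/-- `∂(Rzᵀ)/∂θ`. -/
noncomputable def dRzT (θ : ℝ) : Matrix (Fin 3) (Fin 3) ℝ :=
  !![-sin θ, cos θ, 0; -cos θ, -sin θ, 0; 0, 0, 0]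

/-- The matrix `V(v)` whose columns are `(∂Rxᵀ/∂θx) Ryᵀ Rzᵀ v`, `Rxᵀ (∂Ryᵀ/∂θy) Rzᵀ v`,
and `Rxᵀ Ryᵀ (∂Rzᵀ/∂θz) v`, scaled by `1/‖v‖`. -/
noncomputable def Vmat (θx θy θz : ℝ) (v : EuclideanSpace ℝ (Fin 3)) :
    Matrix (Fin 3) (Fin 3) ℝ :=
  (1 / ‖v‖) • Matrix.of fun i j =>
    ![(dRxT θx * (Ry θy)ᵀ * (Rz θz)ᵀ) *ᵥ (fun k => v k),
      ((Rx θx)ᵀ * dRyT θy * (Rz θz)ᵀ) *ᵥ (fun k => v k),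
      ((Rx θx)ᵀ * (Ry θy)ᵀ * dRzT θz) *ᵥ (fun k => v k)] j i

/-- Theorem 5(ii) (gimbal lock): at `θy = π/2`, for every `v` the matrix `V(v)` has
rank at most `2`; in particular `det V(v) = 0`. -/
theorem Vmat_rank_le_two_of_gimbal_lock (θx θz : ℝ) (v : EuclideanSpace ℝ (Fin 3)) :
    (Vmat θx (π / 2) θz v).rank ≤ 2 ∧ (Vmat θx (π / 2) θz v).det = 0 := by
  have hdet : (Vmat θx (π / 2) θz v).det = 0 := by
    have h1 : sin (π/2) = 1 := Real.sin_pi_div_two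
    have h0 : cos (π/2) = 0 := Real.cos_pi_div_two
    simp only [Vmat, Rx, Ry, Rz, dRxT, dRyT, dRzT, h1, h0, det_fin_three, Matrix.smul_apply,
      Matrix.of_apply, Matrix.cons_val', Matrix.cons_val_zero, Matrix.cons_val_one,
      Matrix.head_cons, Matrix.mulVec, dotProduct, Fin.sum_univ_three,
      Matrix.mul_apply, Matrix.transpose_apply, Matrix.cons_val_fin_one, Matrix.empty_val',
      Matrix.head_fin_const, smul_eq_mul, Matrix.cons_val_two, Matrix.tail_cons]
    ring
  refine ⟨?_, hdet⟩
  set A := Vmat θx (π / 2) θz v with hA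
  by_contra h
  push_neg at h
  have h3 : A.rank = 3 := le_antisymm (by simpa using A.rank_le_card_width) h
  have hrange : LinearMap.range A.mulVecLin = ⊤ := by
    apply Submodule.eq_top_of_finrank_eq
    simpa [Matrix.rank] using h3
  have hsurj : Function.Surjective A.mulVec :=
    fun y => by obtain ⟨x, hx⟩ := hrange ▸ Submodule.mem_top (x := y); exact ⟨x, hx⟩
  have := Matrix.mulVec_surjective_iff_isUnit.mp hsurj
  rw [Matrix.isUnit_iff_isUnit_det, hdet] at this
  simp at this
end
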